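/- There is a constant B > 1 such that for every m ∈ ℕ there exist real polynomials p_1, …, p_{m+1}, each of degree at most m, satisfying ∫_0^1 t^{i−1} p_j(t) dt = δ_{ij} for all 1 ≤ i, j ≤ m+1, and sup_{0 ≤ t ≤ 1} |p_j(t)| ≤ B^m for every 1 ≤ j ≤ m+1. -/

import Mathlib

/-!
Take `p_j = ∑_k (H⁻¹)_{kj} t^k`, where `H` is the Hilbert matrix: it is the Gram matrix of the
monomials in `L²(0,1)`, hence positive definite, and `H H⁻¹ = 1` is the biorthogonality.
Moreover `∫ p_j² = (H⁻¹)_{jj}` is the `j`-th coefficient of `p_j`.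
Lagrange interpolation at the nodes `k/m` bounds every coefficient of a polynomial of degree
`≤ m` by `24^m N`, where `N` is its sup norm on `[0,1]`. This gives a Lipschitz constant
`m(m+1) 24^m N`, so `|p_j| ≥ N/2` on an interval of length `1/(2(m(m+1) 24^m + 1))` and
`N² ≤ 8 (m(m+1) 24^m + 1) ∫ p_j²`. Combined with `∫ p_j² ≤ 24^m N` this gives `N ≤ 18432^m`.
-/

open Polynomial Finset
open scoped Nat Matrix

-- Indexed from `0`: the entry `(i, k)` is `∫₀¹ t^(i+k) dt`.
noncomputable def hilbertMatrix (m : ℕ) : Matrix (Fin (m + 1)) (Fin (m + 1)) ℝ :=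
  Matrix.of fun i k => (((i : ℕ) : ℝ) + (k : ℕ) + 1)⁻¹

lemma eval_ofFn {n : ℕ} (w : Fin n → ℝ) (t : ℝ) :
    (ofFn n w).eval t = ∑ k, w k * t ^ (k : ℕ) := by
  simp [ofFn_eq_sum_monomial, eval_finsetSum]

lemma integral_pow_mul_eval_ofFn {m : ℕ} (w : Fin (m + 1) → ℝ) (i : Fin (m + 1)) :
    ∫ t in (0 : ℝ)..1, t ^ (i : ℕ) * (ofFn (m + 1) w).eval t = (hilbertMatrix m *ᵥ w) i := by
  simp_rw [eval_ofFn, mul_sum]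
  rw [intervalIntegral.integral_finsetSum fun k _ =>
    (by fun_prop : Continuous _).intervalIntegrable _ _]
  refine sum_congr rfl fun k _ => ?_
  simp_rw [mul_left_comm _ (w k), ← pow_add]
  rw [intervalIntegral.integral_const_mul, integral_pow, hilbertMatrix, Matrix.of_apply]
  push_cast
  ring

lemma integral_eval_ofFn_sq {m : ℕ} (w : Fin (m + 1) → ℝ) :
    ∫ t in (0 : ℝ)..1, (ofFn (m + 1) w).eval t ^ 2 = w ⬝ᵥ (hilbertMatrix m *ᵥ w) := by
  have hsq (t : ℝ) : (ofFn (m + 1) w).eval t ^ 2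
      = ∑ i, w i * (t ^ (i : ℕ) * (ofFn (m + 1) w).eval t) := by
    rw [sq]
    nth_rewrite 1 [eval_ofFn]
    rw [sum_mul]
    exact sum_congr rfl fun i _ => by ring
  simp_rw [hsq]
  rw [intervalIntegral.integral_finsetSum fun i _ =>
    (by fun_prop : Continuous _).intervalIntegrable _ _]
  simp_rw [intervalIntegral.integral_const_mul, integral_pow_mul_eval_ofFn]
  rfl

lemma hilbertMatrix_posDef (m : ℕ) : (hilbertMatrix m).PosDef := by
  refine Matrix.PosDef.of_dotProduct_mulVec_pos
    (Matrix.IsHermitian.ext fun i k => by simp [hilbertMatrix, add_comm])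
    fun w hw => ?_
  rw [star_trivial, ← integral_eval_ofFn_sq]
  have hp : ofFn (m + 1) w ≠ 0 := fun h => hw (injective_ofFn _ (h.trans (ofFn_zero _).symm))
  obtain ⟨c, hc, hpc⟩ : ∃ c ∈ Set.Icc (0 : ℝ) 1, (ofFn (m + 1) w).eval c ≠ 0 := by
    by_contra! h
    exact hp (eq_zero_of_infinite_isRoot _ ((Set.Icc_infinite zero_lt_one).mono h))
  exact intervalIntegral.integral_pos zero_lt_one (by fun_prop) (fun t _ => sq_nonneg _)
    ⟨c, hc, sq_pos_iff.2 hpc⟩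

lemma abs_coeff_prod_X_sub_C_le {ι : Type*} (s : Finset ι) (b : ι → ℝ)
    (hb : ∀ j ∈ s, |b j| ≤ 1) (k : ℕ) : |(∏ j ∈ s, (X - C (b j))).coeff k| ≤ 2 ^ #s := by
  classical
  induction s using Finset.induction_on generalizing k with
  | empty => rw [prod_empty, coeff_one]; split_ifs <;> norm_num
  | insert a s ha ih =>
    have ih' := ih fun j hj => hb j (mem_insert_of_mem hj)
    rw [prod_insert ha, card_insert_of_notMem ha, pow_succ, mul_two]
    set P := ∏ j ∈ s, (X - C (b j))
    have hbP (n : ℕ) : |b a * P.coeff n| ≤ 2 ^ #s := by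
      rw [abs_mul]
      exact (mul_le_of_le_one_left (abs_nonneg _) (hb a (mem_insert_self a s))).trans (ih' n)
    cases k with
    | zero =>
      rw [mul_coeff_zero, coeff_sub, coeff_X_zero, coeff_C_zero, zero_sub, neg_mul, abs_neg]
      exact (hbP 0).trans (le_add_of_nonneg_left (by positivity))
    | succ n =>
      rw [coeff_X_sub_C_mul]
      exact (abs_sub _ _).trans (add_le_add (ih' n) (hbP (n + 1)))

lemma prod_erase_range_abs_sub_eq {m i : ℕ} (hi : i ≤ m) :
    ∏ j ∈ (range (m + 1)).erase i, |(i : ℝ) - j| = i ! * (m - i)! := by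
  induction m, hi using Nat.le_induction with
  | base =>
    rw [range_add_one, erase_insert notMem_range_self, ← Nat.descFactorial_self,
      Nat.descFactorial_eq_prod_range, Nat.cast_prod, Nat.sub_self, Nat.factorial_zero,
      Nat.cast_one, mul_one]
    refine prod_congr rfl fun j hj => ?_
    rw [mem_range] at hj
    rw [Nat.cast_sub hj.le, abs_of_nonneg (sub_nonneg.2 (Nat.cast_le.2 hj.le))]
  | succ m hm ih =>
    rw [range_add_one, erase_insert_of_ne (by omega), prod_insert (by simp), ih,
      Nat.sub_add_comm hm, Nat.factorial_succ, abs_sub_comm,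
      abs_of_nonneg (sub_nonneg.2 (by exact_mod_cast (by omega : i ≤ m + 1)))]
    push_cast [hm]; ring

lemma pow_le_six_pow_mul_factorial_mul_factorial {m i : ℕ} (hi : i ≤ m) :
    (m : ℝ) ^ m ≤ 6 ^ m * (i ! * (m - i)!) := by
  have hexp : (m : ℝ) ^ m ≤ 3 ^ m * m ! := by
    have h := Real.pow_div_factorial_le_exp (m : ℝ) (Nat.cast_nonneg m) m
    rw [div_le_iff₀ (by positivity), ← Real.exp_one_pow] at h
    exact h.trans (by gcongr; exact Real.exp_one_lt_three.le)
  have hchoose : (m ! : ℝ) ≤ 2 ^ m * (i ! * (m - i)!) := by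
    rw [← Nat.choose_mul_factorial_mul_factorial hi, Nat.cast_mul, Nat.cast_mul, mul_assoc]
    gcongr
    exact_mod_cast Nat.choose_le_two_pow m i
  calc (m : ℝ) ^ m ≤ 3 ^ m * (2 ^ m * (i ! * (m - i)!)) := hexp.trans (by gcongr)
    _ = 6 ^ m * (i ! * (m - i)!) := by rw [← mul_assoc, ← mul_pow]; norm_num

-- For `m = 0` the single node is `0 / 0 = 0`.
lemma abs_coeff_basis_le {m i : ℕ} (hi : i ≤ m) (k : ℕ) :
    |(Lagrange.basis (range (m + 1)) (fun j : ℕ => (j : ℝ) / m) i).coeff k| ≤ 12 ^ m := by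
  set s := (range (m + 1)).erase i
  set v : ℕ → ℝ := fun j => (j : ℝ) / m
  have hcard : #s = m := by simp [s, card_erase_of_mem, Nat.lt_succ_of_le hi]
  have hbasis : Lagrange.basis (range (m + 1)) v i
      = C (∏ j ∈ s, (v i - v j)⁻¹) * ∏ j ∈ s, (X - C (v j)) := by
    rw [Lagrange.basis, map_prod, ← prod_mul_distrib]; rfl
  have hnodes : ∀ j ∈ s, |v j| ≤ 1 := fun j hj => by
    have hj : j ≤ m := Nat.lt_succ_iff.1 (mem_range.1 (mem_of_mem_erase hj))
    rw [abs_of_nonneg (by positivity)]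
    exact div_le_one_of_le₀ (Nat.cast_le.2 hj) (Nat.cast_nonneg m)
  have hweight : |∏ j ∈ s, (v i - v j)⁻¹| ≤ 6 ^ m := by
    have hdist : ∏ j ∈ s, |v i - v j| = i ! * (m - i)! / m ^ m := by
      simp only [v, ← sub_div, abs_div, Nat.abs_cast]
      rw [prod_div_distrib, prod_const, hcard, prod_erase_range_abs_sub_eq hi]
    rw [abs_prod]
    simp only [abs_inv]
    rw [prod_inv_distrib, hdist, inv_div, div_le_iff₀ (by positivity)]
    exact pow_le_six_pow_mul_factorial_mul_factorial hi
  rw [hbasis, coeff_C_mul, abs_mul]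
  calc _ ≤ 6 ^ m * 2 ^ #s :=
        mul_le_mul hweight (abs_coeff_prod_X_sub_C_le s v hnodes k) (abs_nonneg _) (by positivity)
    _ = 12 ^ m := by rw [hcard, ← mul_pow]; norm_num

lemma abs_coeff_le_of_abs_eval_le {q : ℝ[X]} {m : ℕ} (hq : q.natDegree ≤ m) {N : ℝ}
    (hN : ∀ t ∈ Set.Icc (0 : ℝ) 1, |q.eval t| ≤ N) (k : ℕ) : |q.coeff k| ≤ 24 ^ m * N := by
  set v : ℕ → ℝ := fun j => (j : ℝ) / m
  have hinj : Set.InjOn v (range (m + 1)) := by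
    rcases Nat.eq_zero_or_pos m with rfl | hm
    · intro a ha b hb _
      simp_all
    · intro a _ b _ hab
      exact_mod_cast (div_left_inj' (by positivity)).1 hab
  have hdeg : q.degree < #(range (m + 1)) := by
    rw [card_range]
    exact degree_le_natDegree.trans_lt (by exact_mod_cast Nat.lt_succ_of_le hq)
  have hnodes : ∀ j ∈ range (m + 1), v j ∈ Set.Icc (0 : ℝ) 1 := fun j hj =>
    ⟨by positivity, div_le_one_of_le₀ (by exact_mod_cast Nat.lt_succ_iff.1 (mem_range.1 hj))
      (Nat.cast_nonneg m)⟩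
  have hN0 : 0 ≤ N := (abs_nonneg _).trans (hN 0 (by simp))
  rw [Lagrange.eq_interpolate hinj hdeg, Lagrange.interpolate_apply, finsetSum_coeff]
  calc _ ≤ ∑ j ∈ range (m + 1), N * 12 ^ m := by
        refine (abs_sum_le_sum_abs _ _).trans (sum_le_sum fun j hj => ?_)
        rw [coeff_C_mul, abs_mul]
        exact mul_le_mul (hN _ (hnodes j hj))
          (abs_coeff_basis_le (Nat.lt_succ_iff.1 (mem_range.1 hj)) k) (abs_nonneg _) hN0
    _ = (m + 1 : ℕ) * (N * 12 ^ m) := by rw [sum_const, card_range, nsmul_eq_mul]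
    _ ≤ 2 ^ m * (N * 12 ^ m) := by gcongr; exact_mod_cast Nat.lt_two_pow_self
    _ = 24 ^ m * N := by rw [show (24 : ℝ) = 2 * 12 by norm_num, mul_pow]; ring

lemma abs_eval_sub_eval_le {q : ℝ[X]} {m : ℕ} (hq : q.natDegree ≤ m) {A : ℝ}
    (hA : ∀ k, |q.coeff k| ≤ A) {x y : ℝ} (hx : x ∈ Set.Icc (0 : ℝ) 1)
    (hy : y ∈ Set.Icc (0 : ℝ) 1) :
    |q.eval x - q.eval y| ≤ m * (m + 1) * A * |x - y| := by
  have hA0 : 0 ≤ A := (abs_nonneg _).trans (hA 0)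
  have hmax : max |x| |y| ≤ 1 := max_le (abs_le.2 ⟨by linarith [hx.1], hx.2⟩)
    (abs_le.2 ⟨by linarith [hy.1], hy.2⟩)
  have hpow (k : ℕ) (hk : k ≤ m) : |x ^ k - y ^ k| ≤ m * |x - y| :=
    calc |x ^ k - y ^ k| ≤ |x - y| * k * max |x| |y| ^ (k - 1) := abs_pow_sub_pow_le ..
      _ ≤ |x - y| * m * 1 := by
        gcongr
        exact pow_le_one₀ (le_max_of_le_left (abs_nonneg x)) hmax
      _ = m * |x - y| := by ring
  rw [eval_eq_sum_range' (Nat.lt_succ_of_le hq), eval_eq_sum_range' (Nat.lt_succ_of_le hq),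
    ← sum_sub_distrib]
  calc _ ≤ ∑ k ∈ range (m + 1), A * (m * |x - y|) := by
        refine (abs_sum_le_sum_abs _ _).trans (sum_le_sum fun k hk => ?_)
        rw [← mul_sub, abs_mul]
        exact mul_le_mul (hA k) (hpow k (Nat.lt_succ_iff.1 (mem_range.1 hk))) (abs_nonneg _) hA0
    _ = m * (m + 1) * A * |x - y| := by
        rw [sum_const, card_range, nsmul_eq_mul]; push_cast; ring

lemma sq_le_mul_integral_sq {f : ℝ → ℝ} (hf : Continuous f) {K x : ℝ} (hK : 0 ≤ K)
    (hx : x ∈ Set.Icc (0 : ℝ) 1)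
    (hlip : ∀ t ∈ Set.Icc (0 : ℝ) 1, |f x - f t| ≤ K * |f x| * |x - t|) :
    f x ^ 2 ≤ 8 * (K + 1) * ∫ t in (0 : ℝ)..1, f t ^ 2 := by
  set δ := (2 * (K + 1))⁻¹
  have hδK : δ * (2 * (K + 1)) = 1 := inv_mul_cancel₀ (by positivity)
  have hδ : 0 < δ := by positivity
  have hKδ : K * δ + δ = 1 / 2 := by linear_combination hδK / 2
  have hδ1 : δ ≤ 1 / 2 := by linarith [mul_nonneg hK hδ.le]
  obtain ⟨a, ha0, hax, hxa, ha1⟩ : ∃ a, 0 ≤ a ∧ a ≤ x ∧ x ≤ a + δ ∧ a + δ ≤ 1 := by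
    rcases le_total x (1 - δ) with h | h
    · exact ⟨x, hx.1, le_rfl, by linarith, by linarith⟩
    · exact ⟨1 - δ, by linarith, h, by linarith [hx.2], by linarith⟩
  have hhalf : ∀ t ∈ Set.Icc a (a + δ), (f x / 2) ^ 2 ≤ f t ^ 2 := fun t ht => by
    have hdist : |x - t| ≤ δ := abs_le.2 ⟨by linarith [ht.2], by linarith [ht.1]⟩
    have hclose := (hlip t ⟨ha0.trans ht.1, ht.2.trans ha1⟩).trans
      (mul_le_mul_of_nonneg_left hdist (by positivity))
    rw [sq_le_sq, abs_div, abs_two]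
    nlinarith [abs_sub_abs_le_abs_sub (f x) (f t), abs_nonneg (f x)]
  have hint : ∀ c d : ℝ, IntervalIntegrable (fun t => f t ^ 2) MeasureTheory.volume c d :=
    fun c d => (hf.pow 2).intervalIntegrable c d
  calc f x ^ 2 = 8 * (K + 1) * (δ * (f x / 2) ^ 2) := by linear_combination (-f x ^ 2) * hδK
    _ ≤ 8 * (K + 1) * ∫ t in a..a + δ, f t ^ 2 := by
        gcongr
        simpa using intervalIntegral.integral_mono_on (by linarith) intervalIntegrable_const
          (hint a (a + δ)) hhalf
    _ ≤ 8 * (K + 1) * ∫ t in (0 : ℝ)..1, f t ^ 2 := by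
        gcongr
        exact intervalIntegral.integral_mono_interval ha0 (by linarith) ha1
          (Filter.Eventually.of_forall fun t => sq_nonneg (f t)) (hint 0 1)

lemma sq_eval_le_integral_sq {q : ℝ[X]} {m : ℕ} (hq : q.natDegree ≤ m) {x : ℝ}
    (hx : x ∈ Set.Icc (0 : ℝ) 1) (hmax : ∀ t ∈ Set.Icc (0 : ℝ) 1, |q.eval t| ≤ |q.eval x|) :
    q.eval x ^ 2 ≤ 8 * (m * (m + 1) * 24 ^ m + 1) * ∫ t in (0 : ℝ)..1, q.eval t ^ 2 :=
  sq_le_mul_integral_sq q.continuous (by positivity) hx fun t ht =>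
    (abs_eval_sub_eval_le hq (abs_coeff_le_of_abs_eval_le hq hmax) hx ht).trans_eq (by ring)

lemma abs_eval_le_of_integral_sq_le_coeff {q : ℝ[X]} {m : ℕ} (hq : q.natDegree ≤ m) {j : ℕ}
    (hj : ∫ t in (0 : ℝ)..1, q.eval t ^ 2 ≤ q.coeff j) :
    ∀ t ∈ Set.Icc (0 : ℝ) 1, |q.eval t| ≤ 8 * (m * (m + 1) * 24 ^ m + 1) * 24 ^ m := by
  obtain ⟨x, hx, hmax⟩ := isCompact_Icc.exists_isMaxOn (Set.nonempty_Icc.2 zero_le_one)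
    (continuous_abs.comp q.continuous).continuousOn
  replace hmax : ∀ t ∈ Set.Icc (0 : ℝ) 1, |q.eval t| ≤ |q.eval x| := fun t ht => hmax ht
  set N := |q.eval x|
  have hsq : N * N ≤ 8 * (m * (m + 1) * 24 ^ m + 1) * 24 ^ m * N :=
    calc N * N = q.eval x ^ 2 := by rw [← sq, sq_abs]
      _ ≤ 8 * (m * (m + 1) * 24 ^ m + 1) * ∫ t in (0 : ℝ)..1, q.eval t ^ 2 :=
        sq_eval_le_integral_sq hq hx hmax
      _ ≤ 8 * (m * (m + 1) * 24 ^ m + 1) * (24 ^ m * N) := by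
        gcongr
        exact hj.trans ((le_abs_self _).trans (abs_coeff_le_of_abs_eval_le hq hmax j))
      _ = _ := by ring
  intro t ht
  refine (hmax t ht).trans ?_
  rcases (abs_nonneg _ : 0 ≤ N).eq_or_lt with h | h
  · rw [show N = 0 from h.symm]; positivity
  · exact le_of_mul_le_mul_right hsq h

lemma eight_mul_pow_le {m : ℕ} (hm : 1 ≤ m) :
    8 * ((m : ℝ) * (m + 1) * 24 ^ m + 1) * 24 ^ m ≤ 18432 ^ m := by
  have h4 : m * (m + 1) + 1 ≤ 4 ^ m := by
    have := Nat.lt_two_pow_self (n := m)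
    calc m * (m + 1) + 1 ≤ 2 ^ m * 2 ^ m := Nat.mul_lt_mul_of_lt_of_le this this (by omega)
      _ = 4 ^ m := by rw [← mul_pow]; norm_num
  have h8 : 8 ≤ 8 ^ m := Nat.le_self_pow (by omega) 8
  have : 8 * (m * (m + 1) * 24 ^ m + 1) * 24 ^ m ≤ 18432 ^ m :=
    calc 8 * (m * (m + 1) * 24 ^ m + 1) * 24 ^ m
        ≤ 8 ^ m * ((m * (m + 1) + 1) * 24 ^ m) * 24 ^ m := by
          gcongr; nlinarith [Nat.one_le_pow m 24 (by norm_num)]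
      _ ≤ 8 ^ m * (4 ^ m * 24 ^ m) * 24 ^ m := by gcongr
      _ = 18432 ^ m := by rw [← mul_pow, ← mul_pow, ← mul_pow]; norm_num
  exact_mod_cast this

/-- There is a constant `B > 1` such that for every `m` there are real polynomials
`p_1, …, p_{m+1}` of degree at most `m`, biorthogonal to the monomials `1, t, …, t^m` on
`[0,1]` (`∫_0^1 t^{i-1} p_j(t) dt = δ_{ij}`), with `sup_{0 ≤ t ≤ 1} |p_j(t)| ≤ B^m`. -/
theorem statement19 :
    ∃ B : ℝ, 1 < B ∧
      ∀ m : ℕ, ∃ p : Fin (m + 1) → Polynomial ℝ,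
        (∀ j, (p j).natDegree ≤ m) ∧
        (∀ i j : Fin (m + 1),
          (∫ t in (0 : ℝ)..1, t ^ (i : ℕ) * (p j).eval t) = if i = j then 1 else 0) ∧
        (∀ j, ∀ t ∈ Set.Icc (0 : ℝ) 1, |(p j).eval t| ≤ B ^ m) := by
  refine ⟨18432, by norm_num, fun m => ?_⟩
  rcases Nat.eq_zero_or_pos m with rfl | hm
  -- for `m = 0` the general bound is `8`, not `B ^ 0 = 1`
  · refine ⟨fun _ => 1, fun _ => by simp, fun i j => ?_, fun _ _ _ => by simp⟩
    obtain rfl : i = j := Subsingleton.elim (α := Fin 1) i j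
    simp
  set H := hilbertMatrix m
  have hHH : H * H⁻¹ = 1 := Matrix.mul_nonsing_inv _
    ((Matrix.isUnit_iff_isUnit_det _).1 (hilbertMatrix_posDef m).isUnit)
  set p : Fin (m + 1) → ℝ[X] := fun j => ofFn (m + 1) (H⁻¹ *ᵥ Pi.single j 1)
  have hmoments (j : Fin (m + 1)) : H *ᵥ (H⁻¹ *ᵥ Pi.single j 1) = Pi.single j 1 := by
    rw [Matrix.mulVec_mulVec, hHH, Matrix.one_mulVec]
  have hdeg (j : Fin (m + 1)) : (p j).natDegree ≤ m :=
    Nat.lt_succ_iff.1 (ofFn_natDegree_lt (Nat.le_add_left 1 m) _)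
  refine ⟨p, hdeg, fun i j => ?_, fun j t ht => ?_⟩
  · rw [integral_pow_mul_eval_ofFn, hmoments, Pi.single_apply]
  · have hj : ∫ t in (0 : ℝ)..1, (p j).eval t ^ 2 = (p j).coeff j := by
      rw [integral_eval_ofFn_sq, hmoments, dotProduct_single, mul_one, ofFn_coeff_eq_val_of_lt]
    exact (abs_eval_le_of_integral_sq_le_coeff (hdeg j) hj.le t ht).trans (eight_mul_pow_le hm)
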